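/- arXiv:2103.07168 — 8 statements merged into one kernel-verified Lean document; each statement's English description precedes it below -/
import Mathlib

section
/- As α tends to 1, the Tsallis extropy JS_α(p) converges to the extropy J(p) = -Σ_{i=1}^N (1 - p_i) log(1 - p_i). -/
/-! Since `∑ i, (1 - p i) = N - 1`, the quotient is minus the difference quotient at `α = 1` of
`α ↦ ∑ i, (1 - p i) ^ α`, so its limit is minus the derivative `∑ i, (1 - p i) * log (1 - p i)`. -/

open Filter Topology Real

theorem hasDerivAt_sum_const_rpow {ι : Type*} (s : Finset ι) {a : ι → ℝ}
    (ha : ∀ i ∈ s, 0 < a i) (x : ℝ) :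
    HasDerivAt (fun α : ℝ => ∑ i ∈ s, a i ^ α) (∑ i ∈ s, a i ^ x * log (a i)) x :=
  HasDerivAt.fun_sum fun i hi => (hasStrictDerivAt_const_rpow (ha i hi) x).hasDerivAt

theorem tendsto_sum_rpow_sub_sum_div_sub_one {ι : Type*} (s : Finset ι) {a : ι → ℝ}
    (ha : ∀ i ∈ s, 0 < a i) :
    Tendsto (fun α : ℝ => (∑ i ∈ s, a i ^ α - ∑ i ∈ s, a i) / (α - 1)) (𝓝[≠] 1)
      (𝓝 (∑ i ∈ s, a i * log (a i))) := by
  have hslope := hasDerivAt_iff_tendsto_slope.mp (hasDerivAt_sum_const_rpow s ha 1)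
  simp only [rpow_one] at hslope
  exact hslope.congr fun α => by simp only [slope_def_field, rpow_one]

theorem tsallis_extropy_tendsto_extropy_general (N : ℕ) (p : Fin N → ℝ)
    (hp : ∀ i, 0 ≤ p i ∧ p i < 1) (hsum : ∑ i, p i = 1) :
    Filter.Tendsto (fun α : ℝ => ((N : ℝ) - 1 - ∑ i, (1 - p i) ^ α) / (α - 1))
      (nhdsWithin 1 {(1 : ℝ)}ᶜ)
      (nhds (-∑ i, (1 - p i) * Real.log (1 - p i))) := by
  have hpos : ∀ i ∈ Finset.univ, 0 < 1 - p i := fun i _ => sub_pos.mpr (hp i).2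
  have hmass : ∑ i, (1 - p i) = (N : ℝ) - 1 := by
    simp [Finset.sum_sub_distrib, hsum]
  refine (tendsto_sum_rpow_sub_sum_div_sub_one Finset.univ hpos).neg.congr fun α => ?_
  rw [hmass, ← neg_div, neg_sub]

theorem tsallis_extropy_tendsto_extropy (N : ℕ) (hN : 0 < N) (p : Fin N → ℝ)
    (hp : ∀ i, 0 ≤ p i ∧ p i < 1) (hsum : ∑ i, p i = 1) :
    Filter.Tendsto (fun α : ℝ => ((N : ℝ) - 1 - ∑ i, (1 - p i) ^ α) / (α - 1))
      (nhdsWithin 1 {(1 : ℝ)}ᶜ)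
      (nhds (-∑ i, (1 - p i) * Real.log (1 - p i))) :=
  tsallis_extropy_tendsto_extropy_general N p hp hsum
end

section
/- For α = 2, the Tsallis extropy coincides with the Tsallis entropy: JS_2(p) = N - 1 - Σ_{i=1}^N (1-p_i)^2 = 1 - Σ_{i=1}^N p_i^2 = S_2(p). -/
theorem tsallis_extropy_eq_entropy_alpha_two (N : ℕ) (hN : 1 ≤ N) (p : Fin N → ℝ)
    (hsum : ∑ i, p i = 1) :
    (N : ℝ) - 1 - ∑ i, (1 - p i) ^ 2 = 1 - ∑ i, (p i) ^ 2 := by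
  have h : ∑ i, (1 - p i) ^ 2 = ∑ i, (1 - 2 * p i + (p i) ^ 2) := by
    apply Finset.sum_congr rfl; intro i _; ring
  rw [h]
  simp [Finset.sum_add_distrib, Finset.sum_sub_distrib, ← Finset.sum_mul, hsum]
  have h2 : ∑ x : Fin N, p x * 2 = 2 := by rw [← Finset.sum_mul, hsum]; ring
  have h3 : ∑ x : Fin N, 2 * p x = 2 := by rw [← Finset.mul_sum, hsum]; ring
  linarith
end

section
/- For the uniform distribution over N points, the Tsallis extropy equals ((N-1)/(α-1)) · (N^{α-1} - (N-1)^{α-1})/N^{α-1}. -/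
theorem tsallis_extropy_uniform (N : ℕ) (hN : 1 ≤ N)
    (α : ℝ) (hα : 0 < α) (hα1 : α ≠ 1) :
    ((N : ℝ) - 1 - ∑ _i : Fin N, (1 - 1 / (N : ℝ)) ^ α) / (α - 1) =
      ((N : ℝ) - 1) * ((N : ℝ) ^ (α - 1) - ((N : ℝ) - 1) ^ (α - 1)) /
        ((α - 1) * (N : ℝ) ^ (α - 1)) := by
  rw [Finset.sum_const, Finset.card_univ, Fintype.card_fin, nsmul_eq_mul]
  rcases eq_or_lt_of_le hN with h1 | h2
  · subst h1; simp [Real.zero_rpow hα.ne']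
  · have hN2 : (2 : ℕ) ≤ N := h2
    have hNpos : (0 : ℝ) < N := by positivity
    have hN1 : (0 : ℝ) < (N : ℝ) - 1 := by
      have : (2 : ℝ) ≤ N := by exact_mod_cast hN2
      linarith
    have key : (1 - 1 / (N : ℝ)) ^ α = ((N : ℝ) - 1) ^ α / (N : ℝ) ^ α := by
      rw [← Real.div_rpow hN1.le hNpos.le]
      congr 1
      field_simp
    rw [key]
    have hNa : (0 : ℝ) < (N : ℝ) ^ α := Real.rpow_pos_of_pos hNpos α
    have hNa1 : (0 : ℝ) < (N : ℝ) ^ (α - 1) := Real.rpow_pos_of_pos hNpos _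
    have hα1' : α - 1 ≠ 0 := sub_ne_zero.mpr hα1
    have hsplit : (N : ℝ) ^ α = (N : ℝ) ^ (α - 1) * (N : ℝ) := by
      rw [Real.rpow_sub hNpos, Real.rpow_one]
      field_simp
    have hsplit2 : ((N : ℝ) - 1) ^ α = ((N : ℝ) - 1) ^ (α - 1) * ((N : ℝ) - 1) := by
      rw [Real.rpow_sub hN1, Real.rpow_one]
      field_simp
    rw [hsplit, hsplit2]
    field_simp
end

section
/- Among all probability distributions on N points, the Tsallis extropy JS_α is maximized uniquely by the uniform distribution, i.e., for any probability vector p on N points, JS_α(p) ≤ JS_α(uniform), with equality iff p is uniform. -/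
/-!
Since `∑ i, (1 - p i) = N - 1`, the Tsallis extropy is the sum `∑ i, g (1 - p i)` with
`g t = (t - t ^ α) / (α - 1)`. For every `α > 0`, `α ≠ 1`, the function `g` is strictly concave on
`[0, ∞)`, so by Jensen's inequality with uniform weights the sum is at most `N * g (1 - 1 / N)`,
the value at the uniform distribution, with equality exactly when all `1 - p i` coincide.
-/

open Finset

section Jensen

variable {ι E : Type*} [Fintype ι] [Nonempty ι] [AddCommGroup E] [Module ℝ E]
  {s : Set E} {g : E → ℝ} {x : ι → E}

theorem StrictConcaveOn.const_mul {c : ℝ} (hc : 0 < c) (hg : StrictConcaveOn ℝ s g) :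
    StrictConcaveOn ℝ s fun y ↦ c * g y := by
  refine ⟨hg.1, fun y hy z hz hyz a b ha hb hab ↦ ?_⟩
  have := mul_lt_mul_of_pos_left (hg.2 hy hz hyz ha hb hab) hc
  simp only [smul_eq_mul] at this ⊢
  linarith

theorem ConcaveOn.sum_map_le_card_mul_map_mean (hg : ConcaveOn ℝ s g) (hx : ∀ i, x i ∈ s) :
    ∑ i, g (x i) ≤ Fintype.card ι * g ((Fintype.card ι : ℝ)⁻¹ • ∑ i, x i) := by
  have hcard : (0 : ℝ) < Fintype.card ι := by exact_mod_cast Fintype.card_pos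
  have := hg.le_map_sum (t := univ) (w := fun _ ↦ (Fintype.card ι : ℝ)⁻¹)
    (fun _ _ ↦ by positivity) (by simp [hcard.ne']) (fun i _ ↦ hx i)
  rw [← smul_sum, ← smul_sum, smul_eq_mul] at this
  exact (inv_mul_le_iff₀ hcard).mp this

theorem StrictConcaveOn.sum_map_eq_card_mul_map_mean_iff (hg : StrictConcaveOn ℝ s g)
    (hx : ∀ i, x i ∈ s) :
    ∑ i, g (x i) = Fintype.card ι * g ((Fintype.card ι : ℝ)⁻¹ • ∑ i, x i) ↔
      ∀ i, x i = (Fintype.card ι : ℝ)⁻¹ • ∑ i, x i := by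
  have hcard : (0 : ℝ) < Fintype.card ι := by exact_mod_cast Fintype.card_pos
  have := hg.map_sum_eq_iff (t := univ) (w := fun _ ↦ (Fintype.card ι : ℝ)⁻¹)
    (fun _ _ ↦ by positivity) (by simp [hcard.ne']) (fun i _ ↦ hx i)
  rw [← smul_sum, ← smul_sum, smul_eq_mul, eq_comm, inv_mul_eq_iff_eq_mul₀ hcard.ne'] at this
  simpa using this

end Jensen

section ProbabilityVector

variable {ι : Type*} [Fintype ι] {p : ι → ℝ}

theorem nonempty_of_sum_eq_one (hsum : ∑ i, p i = 1) : Nonempty ι :=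
  univ_nonempty_iff.mp (nonempty_of_sum_ne_zero (hsum ▸ one_ne_zero))

theorem one_sub_mem_Ici_of_sum_eq_one (hp : ∀ i, 0 ≤ p i) (hsum : ∑ i, p i = 1) (i : ι) :
    1 - p i ∈ Set.Ici 0 :=
  sub_nonneg.mpr (hsum ▸ single_le_sum (fun j _ ↦ hp j) (mem_univ i))

theorem inv_card_smul_sum_one_sub (hsum : ∑ i, p i = 1) :
    (Fintype.card ι : ℝ)⁻¹ • ∑ i, (1 - p i) = 1 - 1 / Fintype.card ι := by
  have := nonempty_of_sum_eq_one hsum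
  have hcard : (Fintype.card ι : ℝ) ≠ 0 := by positivity
  rw [sum_sub_distrib, hsum, smul_eq_mul]
  field_simp
  simp

end ProbabilityVector

section TsallisExtropy

variable {ι : Type*} [Fintype ι] {α : ℝ} {p : ι → ℝ}

noncomputable def tsallisExtropy (α : ℝ) (p : ι → ℝ) : ℝ :=
  ((Fintype.card ι : ℝ) - 1 - ∑ i, (1 - p i) ^ α) / (α - 1)

noncomputable def tsallisExtropyTerm (α t : ℝ) : ℝ :=
  (t - t ^ α) / (α - 1)

theorem strictConcaveOn_tsallisExtropyTerm (hα : 0 < α) (hα1 : α ≠ 1) :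
    StrictConcaveOn ℝ (Set.Ici 0) (tsallisExtropyTerm α) := by
  rcases hα1.lt_or_gt with hlt | hgt
  · refine ((Real.strictConcaveOn_rpow hα hlt).sub_convexOn (convexOn_id (convex_Ici 0))).const_mul
      (inv_pos.mpr (sub_pos.mpr hlt)) |>.congr fun t _ ↦ ?_
    simp only [tsallisExtropyTerm, Pi.sub_apply, id]
    field_simp
    ring
  · refine ((concaveOn_id (convex_Ici 0)).sub_strictConvexOn (strictConvexOn_rpow hgt)).const_mul
      (inv_pos.mpr (sub_pos.mpr hgt)) |>.congr fun t _ ↦ ?_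
    simp only [tsallisExtropyTerm, Pi.sub_apply, id]
    field_simp

theorem tsallisExtropy_eq_sum (hsum : ∑ i, p i = 1) :
    tsallisExtropy α p = ∑ i, tsallisExtropyTerm α (1 - p i) := by
  simp only [tsallisExtropy, tsallisExtropyTerm, ← sum_div, sum_sub_distrib, hsum]
  simp

theorem tsallisExtropy_uniform [Nonempty ι] :
    tsallisExtropy α (fun _ : ι ↦ 1 / (Fintype.card ι : ℝ)) =
      Fintype.card ι * tsallisExtropyTerm α (1 - 1 / Fintype.card ι) := by
  have hcard : (Fintype.card ι : ℝ) ≠ 0 := by positivity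
  simp only [tsallisExtropy, tsallisExtropyTerm, sum_const, card_univ, nsmul_eq_mul]
  field_simp

theorem tsallisExtropy_le_uniform (hα : 0 < α) (hα1 : α ≠ 1) (hp : ∀ i, 0 ≤ p i)
    (hsum : ∑ i, p i = 1) :
    tsallisExtropy α p ≤ tsallisExtropy α (fun _ : ι ↦ 1 / (Fintype.card ι : ℝ)) := by
  have := nonempty_of_sum_eq_one hsum
  rw [tsallisExtropy_eq_sum hsum, tsallisExtropy_uniform, ← inv_card_smul_sum_one_sub hsum]
  exact (strictConcaveOn_tsallisExtropyTerm hα hα1).concaveOn.sum_map_le_card_mul_map_mean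
    (one_sub_mem_Ici_of_sum_eq_one hp hsum)

theorem tsallisExtropy_eq_uniform_iff (hα : 0 < α) (hα1 : α ≠ 1) (hp : ∀ i, 0 ≤ p i)
    (hsum : ∑ i, p i = 1) :
    tsallisExtropy α p = tsallisExtropy α (fun _ : ι ↦ 1 / (Fintype.card ι : ℝ)) ↔
      ∀ i, p i = 1 / Fintype.card ι := by
  have := nonempty_of_sum_eq_one hsum
  rw [tsallisExtropy_eq_sum hsum, tsallisExtropy_uniform, ← inv_card_smul_sum_one_sub hsum,
    (strictConcaveOn_tsallisExtropyTerm hα hα1).sum_map_eq_card_mul_map_mean_iff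
      (one_sub_mem_Ici_of_sum_eq_one hp hsum), inv_card_smul_sum_one_sub hsum]
  simp only [sub_right_inj]

end TsallisExtropy

theorem tsallis_extropy_max_uniform_general (N : ℕ)
    (α : ℝ) (hα : 0 < α) (hα1 : α ≠ 1)
    (p : Fin N → ℝ) (hp : ∀ i, 0 ≤ p i) (hsum : ∑ i, p i = 1) :
    ((N : ℝ) - 1 - ∑ i, (1 - p i) ^ α) / (α - 1) ≤
      ((N : ℝ) - 1 - ∑ _i : Fin N, (1 - 1 / (N : ℝ)) ^ α) / (α - 1) ∧
    (((N : ℝ) - 1 - ∑ i, (1 - p i) ^ α) / (α - 1) =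
      ((N : ℝ) - 1 - ∑ _i : Fin N, (1 - 1 / (N : ℝ)) ^ α) / (α - 1) ↔
        ∀ i, p i = 1 / (N : ℝ)) := by
  have hle := tsallisExtropy_le_uniform hα hα1 hp hsum
  have heq := tsallisExtropy_eq_uniform_iff hα hα1 hp hsum
  simp only [tsallisExtropy, Fintype.card_fin] at hle heq
  exact ⟨hle, heq⟩

theorem tsallis_extropy_max_uniform (N : ℕ) (hN : 1 ≤ N)
    (α : ℝ) (hα : 0 < α) (hα1 : α ≠ 1)
    (p : Fin N → ℝ) (hp : ∀ i, 0 ≤ p i) (hsum : ∑ i, p i = 1) :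
    ((N : ℝ) - 1 - ∑ i, (1 - p i) ^ α) / (α - 1) ≤
      ((N : ℝ) - 1 - ∑ _i : Fin N, (1 - 1 / (N : ℝ)) ^ α) / (α - 1) ∧
    (((N : ℝ) - 1 - ∑ i, (1 - p i) ^ α) / (α - 1) =
      ((N : ℝ) - 1 - ∑ _i : Fin N, (1 - 1 / (N : ℝ)) ^ α) / (α - 1) ↔
        ∀ i, p i = 1 / (N : ℝ)) :=
  tsallis_extropy_max_uniform_general N α hα hα1 p hp hsum
end

section
/- The Tsallis extropy of the uniform distribution on N points, namely f(N) = (N - 1 - (N-1)^α/N^{α-1})/(α-1), is increasing in N for every α > 0, α ≠ 1. -/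
/-!
Put `φ(a, b) = a ^ α / b ^ (α - 1) = a ^ α * b ^ (1 - α)`. Then `f(N + 1) - f(N)` is
`(1 - (φ(N, N + 1) - φ(N - 1, N))) / (α - 1)` and `φ(1, 1) = 1`, so it suffices that `φ` is
superadditive for `α < 1` and subadditive for `α > 1`, applied to
`(N, N + 1) = (N - 1, N) + (1, 1)`. The first is the two-term Hölder inequality with exponents
`1/α`, `1/(1 - α)`; the second (Radon's inequality) follows from the first with exponent `1/α`,
since `a = φ(a, b) ^ (1/α) * b ^ (1 - 1/α)`.
-/

open Real

theorem rpow_mul_rpow_one_sub_add_le {α a b c d : ℝ} (hα₀ : 0 < α) (hα₁ : α < 1)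
    (ha : 0 ≤ a) (hb : 0 ≤ b) (hc : 0 ≤ c) (hd : 0 ≤ d) :
    a ^ α * b ^ (1 - α) + c ^ α * d ^ (1 - α) ≤ (a + c) ^ α * (b + d) ^ (1 - α) := by
  have hpq : HolderConjugate α⁻¹ (1 - α)⁻¹ := .inv_one_sub_inv hα₀ hα₁
  have := inner_le_Lp_mul_Lq_of_nonneg (s := Finset.univ) hpq
    (f := ![a ^ α, c ^ α]) (g := ![b ^ (1 - α), d ^ (1 - α)])
    (fun i _ ↦ by fin_cases i <;> simp <;> positivity)
    (fun i _ ↦ by fin_cases i <;> simp <;> positivity)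
  have hα₁' : 1 - α ≠ 0 := by linarith
  simpa [Fin.sum_univ_two, ← rpow_mul, ha, hb, hc, hd, hα₀.ne', hα₁'] using this

theorem rpow_div_rpow_sub_one_rpow_inv_mul {α a b : ℝ} (hα : α ≠ 0) (ha : 0 ≤ a)
    (hb : 0 < b) :
    (a ^ α / b ^ (α - 1)) ^ α⁻¹ * b ^ (1 - α⁻¹) = a := by
  have hexp : (α - 1) * α⁻¹ = 1 - α⁻¹ := by field_simp
  rw [div_rpow (by positivity) (by positivity), rpow_rpow_inv ha hα, ← rpow_mul hb.le, hexp,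
    div_mul_cancel₀ _ (by positivity)]

theorem add_rpow_div_rpow_sub_one_le {α a b c d : ℝ} (hα : 1 < α)
    (ha : 0 ≤ a) (hb : 0 < b) (hc : 0 ≤ c) (hd : 0 < d) :
    (a + c) ^ α / (b + d) ^ (α - 1) ≤ a ^ α / b ^ (α - 1) + c ^ α / d ^ (α - 1) := by
  set u := a ^ α / b ^ (α - 1)
  set v := c ^ α / d ^ (α - 1)
  have hα₀ : 0 < α := by linarith
  have hu : 0 ≤ u := by positivity
  have hv : 0 ≤ v := by positivity
  have hsum : a + c ≤ (u + v) ^ α⁻¹ * (b + d) ^ (1 - α⁻¹) := by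
    calc a + c = u ^ α⁻¹ * b ^ (1 - α⁻¹) + v ^ α⁻¹ * d ^ (1 - α⁻¹) := by
          rw [rpow_div_rpow_sub_one_rpow_inv_mul hα₀.ne' ha hb,
            rpow_div_rpow_sub_one_rpow_inv_mul hα₀.ne' hc hd]
      _ ≤ _ := rpow_mul_rpow_one_sub_add_le (by positivity) (inv_lt_one_of_one_lt₀ hα)
          hu hb.le hv hd.le
  have hbd : 0 < b + d := by positivity
  rw [div_le_iff₀ (by positivity)]
  calc (a + c) ^ α ≤ ((u + v) ^ α⁻¹ * (b + d) ^ (1 - α⁻¹)) ^ α := by gcongr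
    _ = (u + v) * (b + d) ^ (α - 1) := by
      rw [mul_rpow (by positivity) (by positivity), rpow_inv_rpow (by positivity) hα₀.ne',
        ← rpow_mul hbd.le]
      congr 2
      field_simp

theorem div_rpow_sub_one_eq_mul_rpow_one_sub (α x : ℝ) {y : ℝ} (hy : 0 ≤ y) :
    x / y ^ (α - 1) = x * y ^ (1 - α) := by
  rw [← neg_sub, rpow_neg hy, div_eq_mul_inv, inv_inv]

noncomputable def tsallisExtropyUniform (α N : ℝ) : ℝ :=
  (N - 1 - (N - 1) ^ α / N ^ (α - 1)) / (α - 1)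

theorem tsallisExtropyUniform_add_one_sub (α x : ℝ) :
    tsallisExtropyUniform α (x + 1) - tsallisExtropyUniform α x =
      (1 - (x ^ α / (x + 1) ^ (α - 1) - (x - 1) ^ α / x ^ (α - 1))) / (α - 1) := by
  simp only [tsallisExtropyUniform, add_sub_cancel_right]
  ring

theorem tsallisExtropyUniform_le_add_one {α x : ℝ} (hα : 0 < α) (hα₁ : α ≠ 1)
    (hx : 1 ≤ x) :
    tsallisExtropyUniform α x ≤ tsallisExtropyUniform α (x + 1) := by
  rw [← sub_nonneg, tsallisExtropyUniform_add_one_sub]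
  have hx₀ : 0 ≤ x - 1 := by linarith
  rcases hα₁.lt_or_gt with hlt | hgt
  · have h := rpow_mul_rpow_one_sub_add_le hα hlt hx₀ (b := x) (by positivity)
      zero_le_one zero_le_one
    simp only [one_rpow, mul_one, sub_add_cancel] at h
    rw [div_rpow_sub_one_eq_mul_rpow_one_sub _ _ (by positivity),
      div_rpow_sub_one_eq_mul_rpow_one_sub _ _ (by positivity)]
    exact div_nonneg_of_nonpos (by linarith) (by linarith)
  · have h := add_rpow_div_rpow_sub_one_le hgt hx₀ (b := x) (by positivity)
      zero_le_one zero_lt_one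
    simp only [one_rpow, div_one, sub_add_cancel] at h
    exact div_nonneg (by linarith) (by linarith)

theorem tsallis_extropy_uniform_increasing (α : ℝ) (hα : 0 < α) (hα1 : α ≠ 1)
    (N : ℕ) (hN : 1 ≤ N) :
    ((N : ℝ) - 1 - ((N : ℝ) - 1) ^ α / (N : ℝ) ^ (α - 1)) / (α - 1) ≤
      (((N : ℕ) + 1 : ℝ) - 1 - (((N : ℕ) + 1 : ℝ) - 1) ^ α / ((N : ℕ) + 1 : ℝ) ^ (α - 1)) / (α - 1) :=
  tsallisExtropyUniform_le_add_one hα hα1 (Nat.one_le_cast.mpr hN)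
end

section
/- For any probability distribution p on N points and any α > 0 with α ≠ 1, the Tsallis extropy satisfies 0 ≤ JS_α(p) < 1. -/
open Finset in
theorem tsallis_extropy_bounds (N : ℕ) (hN : 1 ≤ N) (p : Fin N → ℝ)
    (hp : ∀ i, 0 ≤ p i) (hsum : ∑ i, p i = 1)
    (α : ℝ) (hα : 0 < α) (hα1 : α ≠ 1) :
    0 ≤ ((N : ℝ) - 1 - ∑ i, (1 - p i) ^ α) / (α - 1) ∧
      ((N : ℝ) - 1 - ∑ i, (1 - p i) ^ α) / (α - 1) < 1 := by
  have hp1 : ∀ i, p i ≤ 1 := by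
    intro i
    rw [← hsum]
    exact Finset.single_le_sum (fun j _ => hp j) (Finset.mem_univ i)
  have hq0 : ∀ i, (0:ℝ) ≤ 1 - p i := fun i => by linarith [hp1 i]
  have hsumq : ∑ i, (1 - p i) = (N:ℝ) - 1 := by
    rw [Finset.sum_sub_distrib, hsum]; simp
  have hsumlin : ∑ i, (1 - α * p i) = (N:ℝ) - α := by
    rw [Finset.sum_sub_distrib, ← Finset.mul_sum, hsum]; simp
  -- exists j with p j > 0
  obtain ⟨j, hj⟩ : ∃ j, 0 < p j := by
    by_contra h
    push_neg at h
    have : ∑ i, p i = 0 := Finset.sum_eq_zero fun i _ => le_antisymm (h i) (hp i)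
    rw [hsum] at this; norm_num at this
  -- Bernoulli comparison : (1 - p i)^α vs 1 - α * p i
  rcases lt_or_gt_of_ne hα1 with hlt | hgt
  · -- α < 1
    have hle : ∀ i, (1 - p i) ≤ (1 - p i) ^ α := by
      intro i
      rcases eq_or_lt_of_le (hq0 i) with h | h
      · rw [← h, Real.zero_rpow hα.ne']
      · calc (1 - p i) = (1 - p i) ^ (1:ℝ) := (Real.rpow_one _).symm
          _ ≤ (1 - p i) ^ α := Real.rpow_le_rpow_of_exponent_ge h (by linarith [hp i]) hlt.le
    have hlower : (N:ℝ) - 1 ≤ ∑ i, (1 - p i) ^ α := by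
      rw [← hsumq]; exact Finset.sum_le_sum fun i _ => hle i
    have hbern : ∀ i, (1 - p i) ^ α ≤ 1 - α * p i := by
      intro i
      have := rpow_one_add_le_one_add_mul_self (s := -p i) (by linarith [hp1 i]) hα.le hlt.le
      simpa [sub_eq_add_neg, mul_neg] using this
    have hbernj : (1 - p j) ^ α < 1 - α * p j := by
      have := rpow_one_add_lt_one_add_mul_self (s := -p j) (by linarith [hp1 j])
        (by simpa using hj.ne') hα hlt
      simpa [sub_eq_add_neg, mul_neg] using this
    have hupper : ∑ i, (1 - p i) ^ α < (N:ℝ) - α := by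
      rw [← hsumlin]
      exact Finset.sum_lt_sum (fun i _ => hbern i) ⟨j, Finset.mem_univ j, hbernj⟩
    have hd : α - 1 < 0 := by linarith
    constructor
    · exact div_nonneg_iff.mpr (Or.inr ⟨by linarith, hd.le⟩)
    · rw [div_lt_iff_of_neg hd]; linarith
  · -- α > 1
    have hle : ∀ i, (1 - p i) ^ α ≤ 1 - p i := by
      intro i
      rcases eq_or_lt_of_le (hq0 i) with h | h
      · rw [← h, Real.zero_rpow hα.ne']
      · calc (1 - p i) ^ α ≤ (1 - p i) ^ (1:ℝ) :=
            Real.rpow_le_rpow_of_exponent_ge h (by linarith [hp i]) hgt.le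
          _ = 1 - p i := Real.rpow_one _
    have hupper : ∑ i, (1 - p i) ^ α ≤ (N:ℝ) - 1 := by
      rw [← hsumq]; exact Finset.sum_le_sum fun i _ => hle i
    have hbern : ∀ i, 1 - α * p i ≤ (1 - p i) ^ α := by
      intro i
      have := one_add_mul_self_le_rpow_one_add (s := -p i) (by linarith [hp1 i]) hgt.le
      simpa [sub_eq_add_neg, mul_neg] using this
    have hbernj : 1 - α * p j < (1 - p j) ^ α := by
      have := one_add_mul_self_lt_rpow_one_add (s := -p j) (by linarith [hp1 j])
        (by simpa using hj.ne') hgt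
      simpa [sub_eq_add_neg, mul_neg] using this
    have hlower : (N:ℝ) - α < ∑ i, (1 - p i) ^ α := by
      rw [← hsumlin]
      exact Finset.sum_lt_sum (fun i _ => hbern i) ⟨j, Finset.mem_univ j, hbernj⟩
    have hd : 0 < α - 1 := by linarith
    constructor
    · apply div_nonneg _ hd.le; linarith
    · rw [div_lt_one hd]; linarith
end

section
/- For N ≥ 3, the inequalities (N-2)/(N-1) < log(N-1)/log N < N(N-2)/(N-1)^2 hold. -/
theorem log_ratio_bounds (N : ℝ) (hN : 3 ≤ N) :
    (N - 2) / (N - 1) < Real.log (N - 1) / Real.log N ∧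
      Real.log (N - 1) / Real.log N < N * (N - 2) / (N - 1) ^ 2 := by
  have h1 : (0:ℝ) < N - 1 := by linarith
  have h2 : (0:ℝ) < N := by linarith
  have hL : 0 < Real.log (N - 1) := Real.log_pos (by linarith)
  have hM : 0 < Real.log N := Real.log_pos (by linarith)
  -- log (N-1) < N - 2
  have hD : Real.log (N - 1) < N - 2 := by
    have := Real.log_lt_sub_one_of_pos h1 (by intro h; linarith)
    linarith
  -- N - 2 < (N-1) * log (N-1)
  have hC : N - 2 < (N - 1) * Real.log (N - 1) := by
    have h := Real.log_lt_sub_one_of_pos (x := (N - 1)⁻¹) (by positivity)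
      (by
        intro h
        have : N - 1 = 1 := by
          field_simp at h
          linarith
        linarith)
    rw [Real.log_inv] at h
    have hc : (N - 1) * (N - 1)⁻¹ = 1 := mul_inv_cancel₀ h1.ne'
    nlinarith [mul_lt_mul_of_pos_left h h1]
  -- (N-1) * (log N - log (N-1)) < 1
  have hd1 : (N - 1) * (Real.log N - Real.log (N - 1)) < 1 := by
    have h := Real.log_lt_sub_one_of_pos (x := N / (N - 1)) (by positivity)
      (by
        intro h
        rw [div_eq_one_iff_eq h1.ne'] at h
        linarith)
    rw [Real.log_div h2.ne' h1.ne'] at h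
    have hc : (N - 1) * (N / (N - 1)) = N := by field_simp
    nlinarith [mul_lt_mul_of_pos_left h h1]
  -- 1 < N * (log N - log (N-1))
  have hd2 : 1 < N * (Real.log N - Real.log (N - 1)) := by
    have h := Real.log_lt_sub_one_of_pos (x := (N - 1) / N) (by positivity)
      (by
        intro h
        rw [div_eq_one_iff_eq h2.ne'] at h
        linarith)
    rw [Real.log_div h1.ne' h2.ne'] at h
    have hc : N * ((N - 1) / N) = N - 1 := by field_simp
    nlinarith [mul_lt_mul_of_pos_left h h2]
  constructor
  · rw [div_lt_div_iff₀ h1 hM]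
    have key : (N - 1) * ((N - 2) * Real.log N) < (N - 1) * (Real.log (N - 1) * (N - 1)) := by
      nlinarith [mul_lt_mul_of_pos_left hd1 (show (0:ℝ) < N - 2 by linarith)]
    exact lt_of_mul_lt_mul_left key h1.le
  · rw [div_lt_div_iff₀ hM (by positivity)]
    nlinarith [mul_lt_mul_of_pos_left hd2 (show (0:ℝ) < N - 2 by linarith)]
end

section
/- For the uniform distribution on N ≥ 3 points, the difference between Tsallis entropy and Tsallis extropy, D(α) = (2N^{α-1} - N^α - 1 + (N-1)^α)/((α-1) N^{α-1}), is positive for 0 < α < 2 (α ≠ 1) and negative for α > 2. -/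
open Set Real

/-! With `y = 1/N`, the difference is `N · G(y)` for `G(y) = ((1-y)^α - y^α + 2y - 1)/(α-1)`.
`G` vanishes at `y = 0` and `y = 1/2`, and `G''(y) = α((1-y)^(α-2) - y^(α-2))` is negative on
`(0, 1/2)` for `α < 2` and positive for `α > 2`. So `G` is strictly concave, resp. convex, on
`[0, 1/2]`, and `1/N ∈ (0, 1/2)` because `N ≥ 3`. -/

lemma StrictConcaveOn.pos_of_left_eq_zero_of_right_eq_zero {f : ℝ → ℝ} {a b x : ℝ}
    (hf : StrictConcaveOn ℝ (Icc a b) f) (ha : f a = 0) (hb : f b = 0) (hx : x ∈ Ioo a b) :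
    0 < f x := by
  have hab : a < b := hx.1.trans hx.2
  simpa [ha, hb] using hf.lt_on_openSegment (left_mem_Icc.2 hab.le) (right_mem_Icc.2 hab.le)
    hab.ne (by rwa [openSegment_eq_Ioo hab])

lemma StrictConvexOn.neg_of_left_eq_zero_of_right_eq_zero {f : ℝ → ℝ} {a b x : ℝ}
    (hf : StrictConvexOn ℝ (Icc a b) f) (ha : f a = 0) (hb : f b = 0) (hx : x ∈ Ioo a b) :
    f x < 0 := by
  simpa using hf.neg.pos_of_left_eq_zero_of_right_eq_zero (by simp [ha]) (by simp [hb]) hx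

noncomputable def tsallisGapProfile (α y : ℝ) : ℝ :=
  ((1 - y) ^ α - y ^ α + 2 * y - 1) / (α - 1)

namespace tsallisGapProfile

variable {α y : ℝ}

lemma hasDerivAt (hy : y ∈ Ioo (0 : ℝ) 1) :
    HasDerivAt (tsallisGapProfile α)
      ((2 - α * (1 - y) ^ (α - 1) - α * y ^ (α - 1)) / (α - 1)) y := by
  have hy₁ : 1 - y ≠ 0 := by linarith [hy.2]
  have hpow₁ := ((hasDerivAt_id y).const_sub 1).rpow_const (p := α) (Or.inl hy₁)
  have hpow₂ := (hasDerivAt_id y).rpow_const (p := α) (Or.inl hy.1.ne')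
  exact ((((hpow₁.sub hpow₂).add ((hasDerivAt_id y).const_mul 2)).sub_const 1).div_const
    (α - 1)).congr_deriv (by simp only [id]; ring)

lemma hasDerivAt_deriv (hα : α ≠ 1) (hy : y ∈ Ioo (0 : ℝ) 1) :
    HasDerivAt (deriv (tsallisGapProfile α)) (α * ((1 - y) ^ (α - 2) - y ^ (α - 2))) y := by
  have hy₁ : 1 - y ≠ 0 := by linarith [hy.2]
  have hderiv : deriv (tsallisGapProfile α) =ᶠ[nhds y]
      fun z ↦ (2 - α * (1 - z) ^ (α - 1) - α * z ^ (α - 1)) / (α - 1) := by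
    filter_upwards [isOpen_Ioo.mem_nhds hy] with z hz using (hasDerivAt hz).deriv
  have hpow₁ := ((hasDerivAt_id y).const_sub 1).rpow_const (p := α - 1) (Or.inl hy₁)
  have hpow₂ := (hasDerivAt_id y).rpow_const (p := α - 1) (Or.inl hy.1.ne')
  refine (((((hpow₁.const_mul α).const_sub 2).sub (hpow₂.const_mul α)).div_const
    (α - 1)).congr_of_eventuallyEq hderiv).congr_deriv ?_
  have : α - 1 - 1 = α - 2 := by ring
  simp only [this, id]
  field_simp [sub_ne_zero.2 hα]

lemma iterate_deriv_two (hα : α ≠ 1) (hy : y ∈ Ioo (0 : ℝ) 1) :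
    deriv^[2] (tsallisGapProfile α) y = α * ((1 - y) ^ (α - 2) - y ^ (α - 2)) :=
  (hasDerivAt_deriv hα hy).deriv

lemma continuous (hα : 0 ≤ α) : Continuous (tsallisGapProfile α) := by
  unfold tsallisGapProfile
  fun_prop (disch := exact Or.inr hα)

lemma apply_zero (hα : α ≠ 0) : tsallisGapProfile α 0 = 0 := by
  simp [tsallisGapProfile, zero_rpow hα]

lemma apply_one_half : tsallisGapProfile α (1 / 2) = 0 := by
  norm_num [tsallisGapProfile]

lemma pos_of_lt_two (hα₀ : 0 < α) (hα₁ : α ≠ 1) (hα₂ : α < 2)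
    (hy : y ∈ Ioo (0 : ℝ) (1 / 2)) :
    0 < tsallisGapProfile α y := by
  refine StrictConcaveOn.pos_of_left_eq_zero_of_right_eq_zero ?_ (apply_zero hα₀.ne')
    apply_one_half hy
  refine strictConcaveOn_of_deriv2_neg (convex_Icc _ _) (continuous hα₀.le).continuousOn
    fun z hz ↦ ?_
  rw [interior_Icc] at hz
  rw [iterate_deriv_two hα₁ ⟨hz.1, by linarith [hz.2]⟩]
  have : (1 - z) ^ (α - 2) < z ^ (α - 2) :=
    rpow_lt_rpow_of_neg hz.1 (by linarith [hz.2]) (by linarith)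
  nlinarith

lemma neg_of_two_lt (hα₂ : 2 < α) (hy : y ∈ Ioo (0 : ℝ) (1 / 2)) :
    tsallisGapProfile α y < 0 := by
  have hα₀ : 0 < α := by linarith
  refine StrictConvexOn.neg_of_left_eq_zero_of_right_eq_zero ?_ (apply_zero hα₀.ne')
    apply_one_half hy
  refine strictConvexOn_of_deriv2_pos (convex_Icc _ _) (continuous hα₀.le).continuousOn
    fun z hz ↦ ?_
  rw [interior_Icc] at hz
  rw [iterate_deriv_two (by linarith) ⟨hz.1, by linarith [hz.2]⟩]
  have : z ^ (α - 2) < (1 - z) ^ (α - 2) :=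
    rpow_lt_rpow hz.1.le (by linarith [hz.2]) (by linarith)
  nlinarith

end tsallisGapProfile

lemma tsallisDiff_uniform_eq {x : ℝ} (hx : 1 ≤ x) (α : ℝ) :
    (2 * x ^ (α - 1) - x ^ α - 1 + (x - 1) ^ α) / ((α - 1) * x ^ (α - 1)) =
      x * tsallisGapProfile α x⁻¹ := by
  have hx₀ : 0 < x := by linarith
  have hsub : (x - 1) ^ α = x ^ α * (1 - x⁻¹) ^ α := by
    rw [← mul_rpow hx₀.le (by rw [sub_nonneg]; exact inv_le_one_of_one_le₀ hx), mul_sub,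
      mul_inv_cancel₀ hx₀.ne', mul_one]
  have hinv : x ^ α * x⁻¹ ^ α = 1 := by
    rw [← mul_rpow hx₀.le (inv_nonneg.2 hx₀.le), mul_inv_cancel₀ hx₀.ne', one_rpow]
  rcases eq_or_ne α 1 with rfl | hα
  · simp [tsallisGapProfile]
  rw [hsub, rpow_sub_one hx₀.ne', tsallisGapProfile]
  field_simp [sub_ne_zero.2 hα]
  rw [one_div]
  linear_combination x * hinv

theorem tsallis_diff_uniform_sign (N : ℕ) (hN : 3 ≤ N) (α : ℝ) (hα : 0 < α) (hα1 : α ≠ 1) :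
    (α < 2 → 0 < (2 * (N : ℝ) ^ (α - 1) - (N : ℝ) ^ α - 1 + ((N : ℝ) - 1) ^ α) /
        ((α - 1) * (N : ℝ) ^ (α - 1))) ∧
    (2 < α → (2 * (N : ℝ) ^ (α - 1) - (N : ℝ) ^ α - 1 + ((N : ℝ) - 1) ^ α) /
        ((α - 1) * (N : ℝ) ^ (α - 1)) < 0) := by
  have hN₃ : (3 : ℝ) ≤ N := by exact_mod_cast hN
  have hN₀ : (0 : ℝ) < N := by linarith
  have hmem : (N : ℝ)⁻¹ ∈ Ioo (0 : ℝ) (1 / 2) :=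
    ⟨inv_pos.2 hN₀, by rw [one_div]; exact inv_strictAnti₀ two_pos (by linarith)⟩
  rw [tsallisDiff_uniform_eq (by linarith) α]
  exact ⟨fun hα₂ ↦ mul_pos hN₀ (tsallisGapProfile.pos_of_lt_two hα hα1 hα₂ hmem),
    fun hα₂ ↦ mul_neg_of_pos_of_neg hN₀ (tsallisGapProfile.neg_of_two_lt hα₂ hmem)⟩
end
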